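/- arXiv:1601.02481 — 3 statements merged into one kernel-verified Lean document; each statement's English description precedes it below -/
import Mathlib

section
/- Suppose y: 2^V → ℝ≥0 satisfies ∑_{S∈𝕊} y_S ≤ f(𝕊) for every family 𝕊 of subsets of V, where f(𝕊) = ∑_{(i,j): 𝕊 separates (i,j)} π_{ij}. If the constraints corresponding to families 𝕊₁ and 𝕊₂ are both tight (hold with equality), then the constraint for 𝕊₁ ∪ 𝕊₂ is also tight. -/
/-!
The left-hand side `𝕊 ↦ ∑ S ∈ 𝕊, y S` is modular, while `f` is submodular: a pair separated by
`𝕊₁ ∩ 𝕊₂` is separated by both families, and one separated by `𝕊₁ ∪ 𝕊₂` by at least one of them.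
Hence `f (𝕊₁ ∪ 𝕊₂) + f (𝕊₁ ∩ 𝕊₂) ≤ f 𝕊₁ + f 𝕊₂ = y (𝕊₁ ∪ 𝕊₂) + y (𝕊₁ ∩ 𝕊₂)`, and feasibility at
`𝕊₁ ∩ 𝕊₂` forces `f (𝕊₁ ∪ 𝕊₂) ≤ y (𝕊₁ ∪ 𝕊₂)`.
-/

open Finset

/-- `S` separates the pair `(i, j)` if it contains exactly one of `i`, `j`. -/
def SepSet {V : Type*} (S : Finset V) (i j : V) : Prop :=
  (i ∈ S ∧ j ∉ S) ∨ (i ∉ S ∧ j ∈ S)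

/-- A family `𝕊` of subsets separates `(i, j)` if some member of `𝕊` does. -/
def SepFam {V : Type*} (𝕊 : Finset (Finset V)) (i j : V) : Prop :=
  ∃ S ∈ 𝕊, SepSet S i j

instance {V : Type*} [DecidableEq V] (S : Finset V) (i j : V) :
    Decidable (SepSet S i j) := by unfold SepSet; infer_instance

instance {V : Type*} [DecidableEq V] (𝕊 : Finset (Finset V)) (i j : V) :
    Decidable (SepFam 𝕊 i j) := by unfold SepFam; infer_instance

/-- The coverage function `f(𝕊) = ∑_{(i,j) : 𝕊 separates (i,j)} π_{ij}`. -/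
def coverF {V : Type*} [Fintype V] [DecidableEq V] (π : V → V → ℝ)
    (𝕊 : Finset (Finset V)) : ℝ :=
  ∑ i : V, ∑ j : V, if SepFam 𝕊 i j then π i j else 0

theorem eq_sup_of_modular_le_submodular {α β : Type*} [Lattice α] [AddCommMonoid β]
    [PartialOrder β] [IsOrderedCancelAddMonoid β] {f g : α → β}
    (hf : ∀ a b, f (a ⊔ b) + f (a ⊓ b) ≤ f a + f b)
    (hg : ∀ a b, g (a ⊔ b) + g (a ⊓ b) = g a + g b) (hle : ∀ a, g a ≤ f a)
    {a b : α} (ha : g a = f a) (hb : g b = f b) : g (a ⊔ b) = f (a ⊔ b) := by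
  refine le_antisymm (hle _) (le_of_add_le_add_right (a := f (a ⊓ b)) ?_)
  calc f (a ⊔ b) + f (a ⊓ b) ≤ f a + f b := hf a b
    _ = g (a ⊔ b) + g (a ⊓ b) := by rw [hg, ha, hb]
    _ ≤ g (a ⊔ b) + f (a ⊓ b) := add_le_add_right (hle _) _

section Separation

variable {V : Type*} {𝕊 𝕋 : Finset (Finset V)} {i j : V}

theorem SepFam.mono (h : 𝕊 ⊆ 𝕋) : SepFam 𝕊 i j → SepFam 𝕋 i j :=
  fun ⟨S, hS, hsep⟩ => ⟨S, h hS, hsep⟩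

theorem sepFam_union [DecidableEq V] : SepFam (𝕊 ∪ 𝕋) i j ↔ SepFam 𝕊 i j ∨ SepFam 𝕋 i j := by
  simp only [SepFam, mem_union, or_and_right, exists_or]

end Separation

theorem ite_or_add_ite_le {β : Type*} [AddCommMonoid β] [PartialOrder β]
    [IsOrderedAddMonoid β] {p q r : Prop} [Decidable p] [Decidable q] [Decidable r]
    (hr : r → p ∧ q) {x : β} (hx : 0 ≤ x) :
    (if p ∨ q then x else 0) + (if r then x else 0) ≤
      (if p then x else 0) + (if q then x else 0) := by
  split_ifs <;> simp_all [le_add_of_nonneg_right]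

theorem coverF_union_add_inter_le {V : Type*} [Fintype V] [DecidableEq V] {π : V → V → ℝ}
    (hπ : ∀ i j, 0 ≤ π i j) (𝕊 𝕋 : Finset (Finset V)) :
    coverF π (𝕊 ∪ 𝕋) + coverF π (𝕊 ∩ 𝕋) ≤ coverF π 𝕊 + coverF π 𝕋 := by
  simp only [coverF, ← sum_add_distrib, sepFam_union]
  refine sum_le_sum fun i _ => sum_le_sum fun j _ => ?_
  refine ite_or_add_ite_le (fun (h : SepFam (𝕊 ∩ 𝕋) i j) => ?_) (hπ i j)
  exact ⟨h.mono inter_subset_left, h.mono inter_subset_right⟩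

theorem union_of_tight_families_tight_general {V : Type*} [Fintype V] [DecidableEq V]
    (π : V → V → ℝ) (hπ : ∀ i j, 0 ≤ π i j)
    (y : Finset V → ℝ)
    (hfeas : ∀ 𝕊 : Finset (Finset V), ∑ S ∈ 𝕊, y S ≤ coverF π 𝕊)
    (𝕊₁ 𝕊₂ : Finset (Finset V))
    (ht1 : ∑ S ∈ 𝕊₁, y S = coverF π 𝕊₁)
    (ht2 : ∑ S ∈ 𝕊₂, y S = coverF π 𝕊₂) :
    ∑ S ∈ 𝕊₁ ∪ 𝕊₂, y S = coverF π (𝕊₁ ∪ 𝕊₂) :=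
  eq_sup_of_modular_le_submodular (coverF_union_add_inter_le hπ)
    (fun _ _ => sum_union_inter) hfeas ht1 ht2

/-- if `y` is feasible for the constraints `∑_{S ∈ 𝕊} y_S ≤ f(𝕊)` and
the constraints for families `𝕊₁` and `𝕊₂` are tight, then the constraint for
`𝕊₁ ∪ 𝕊₂` is also tight. -/
theorem union_of_tight_families_tight {V : Type*} [Fintype V] [DecidableEq V]
    (π : V → V → ℝ) (hπ : ∀ i j, 0 ≤ π i j) (hsymm : ∀ i j, π i j = π j i)
    (y : Finset V → ℝ) (hy : ∀ S, 0 ≤ y S)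
    (hfeas : ∀ 𝕊 : Finset (Finset V), ∑ S ∈ 𝕊, y S ≤ coverF π 𝕊)
    (𝕊₁ 𝕊₂ : Finset (Finset V))
    (ht1 : ∑ S ∈ 𝕊₁, y S = coverF π 𝕊₁)
    (ht2 : ∑ S ∈ 𝕊₂, y S = coverF π 𝕊₂) :
    ∑ S ∈ 𝕊₁ ∪ 𝕊₂, y S = coverF π (𝕊₁ ∪ 𝕊₂) :=
  union_of_tight_families_tight_general π hπ y hfeas 𝕊₁ 𝕊₂ ht1 ht2
end

section
/- By Farkas' lemma: given nonnegative reals y_S for S ⊆ V and penalties π_{ij} ≥ 0, there exist nonnegative y_{S,ij} (defined when S separates (i,j)) with ∑_{(i,j): S⊙(i,j)} y_{S,ij} ≥ y_S for all S and ∑_{S: S⊙(i,j)} y_{S,ij} ≤ π_{ij} for all pairs (i,j), if and only if for every function α: 2^V → ℝ≥0 one has ∑_{S} α_S · y_S ≤ ∑_{(i,j)} (max_{S: S⊙(i,j)} α_S) · π_{ij}. -/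
open Finset

/-- `max_{S : S ⊙ (i,j)} α_S`, with the maximum over the empty set taken to be `0`. -/
noncomputable def maxSep {V : Type*} [Fintype V] [DecidableEq V] (α : Finset V → ℝ) (i j : V) : ℝ :=
  (insert (0 : ℝ) ((Finset.univ.filter (fun S : Finset V => SepSet S i j)).image α)).max'
    (Finset.insert_nonempty _ _)

/-!
The feasibility question is the linear program `M *ᵥ x ≤ b`, `x ≥ 0`, whose rows are the negated
demands `-∑_{ij} y_{S,ij} ≤ -y_S` and the capacities `∑_S y_{S,ij} ≤ π_{ij}`. By Farkas' lemma it is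
feasible iff `0 ≤ w ⬝ᵥ b` for every dual vector `w = (α, β) ≥ 0` with `β_{ij} ≥ α_S` whenever `S`
separates `(i, j)`; since `π ≥ 0`, the binding choice is `β_{ij} = max (0, max_{S ⊙ (i,j)} α_S)`.
Farkas' lemma itself separates `b` from the cone spanned by the columns, which is closed because,
by the conic Carathéodory theorem, it is a finite union of images of orthants under injective
linear maps.
-/

section Caratheodory

variable {𝕜 κ E : Type*} [Field 𝕜] [LinearOrder 𝕜] [IsStrictOrderedRing 𝕜]
  [AddCommGroup E] [Module 𝕜 E] {v : κ → E}

lemma exists_nonneg_sum_erase_eq_of_not_linearIndepOn [DecidableEq κ] {s : Finset κ}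
    (hs : ¬LinearIndepOn 𝕜 v s) {c : κ → 𝕜} (hc : ∀ k ∈ s, 0 ≤ c k) :
    ∃ k ∈ s, ∃ c' : κ → 𝕜, (∀ j ∈ s.erase k, 0 ≤ c' j) ∧
      ∑ j ∈ s.erase k, c' j • v j = ∑ j ∈ s, c j • v j := by
  obtain ⟨g, hg, k₀, hk₀s, hk₀⟩ := not_linearIndepOn_finset_iff.mp hs
  obtain ⟨d, hd, hpos⟩ : ∃ d : κ → 𝕜, ∑ j ∈ s, d j • v j = 0 ∧ ∃ k ∈ s, 0 < d k := by
    rcases hk₀.lt_or_gt with h | h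
    · exact ⟨-g, by simp [neg_smul, sum_neg_distrib, hg], k₀, hk₀s, by simpa using h⟩
    · exact ⟨g, hg, k₀, hk₀s, h⟩
  -- move along the relation `d` until the first coefficient on its positive part vanishes
  obtain ⟨k, hk, hmin⟩ := (s.filter (0 < d ·)).exists_min_image (fun j => c j / d j)
    (by simpa [Finset.Nonempty] using hpos)
  rw [mem_filter] at hk
  have hr : 0 ≤ c k / d k := div_nonneg (hc k hk.1) hk.2.le
  refine ⟨k, hk.1, fun j => c j - c k / d k * d j, fun j hj => ?_, ?_⟩
  · have hjs := mem_of_mem_erase hj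
    rcases le_or_gt (d j) 0 with hdj | hdj
    · nlinarith [hc j hjs]
    · have := (le_div_iff₀ hdj).mp (hmin j (mem_filter.2 ⟨hjs, hdj⟩))
      linarith
  · rw [sum_erase _ (by simp [div_mul_cancel₀ _ hk.2.ne'])]
    simp only [sub_smul, sum_sub_distrib, mul_smul, ← smul_sum, hd, smul_zero, sub_zero]

theorem exists_linearIndepOn_nonneg_sum_eq (s : Finset κ) {c : κ → 𝕜}
    (hc : ∀ k ∈ s, 0 ≤ c k) :
    ∃ t : Finset κ, LinearIndepOn 𝕜 v t ∧
      ∃ c' : κ → 𝕜, (∀ k ∈ t, 0 ≤ c' k) ∧ ∑ k ∈ t, c' k • v k = ∑ k ∈ s, c k • v k := by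
  classical
  induction s using Finset.strongInduction generalizing c with
  | H s ih =>
    by_cases hs : LinearIndepOn 𝕜 v s
    · exact ⟨s, hs, c, hc, rfl⟩
    obtain ⟨k, hk, c', hc', heq⟩ := exists_nonneg_sum_erase_eq_of_not_linearIndepOn hs hc
    obtain ⟨t, ht, c'', hc'', heq'⟩ := ih _ (erase_ssubset hk) hc'
    exact ⟨t, ht, c'', hc'', heq'.trans heq⟩

end Caratheodory

namespace PointedCone

section OrderedField

variable {𝕜 κ E : Type*} [Field 𝕜] [LinearOrder 𝕜] [IsStrictOrderedRing 𝕜]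
  [AddCommGroup E] [Module 𝕜 E] [Fintype κ] {v : κ → E} {x : E}

theorem mem_hull_range_iff :
    x ∈ hull 𝕜 (Set.range v) ↔ ∃ c : κ → 𝕜, 0 ≤ c ∧ ∑ k, c k • v k = x := by
  rw [Submodule.mem_span_range_iff_exists_fun]
  constructor
  · rintro ⟨c, rfl⟩
    exact ⟨fun k => c k, fun k => (c k).2, rfl⟩
  · rintro ⟨c, hc, rfl⟩
    exact ⟨fun k => ⟨c k, hc k⟩, rfl⟩

end OrderedField

section Topology

variable {κ E : Type*} [Fintype κ] [AddCommGroup E] [Module ℝ E] [TopologicalSpace E]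
  [IsTopologicalAddGroup E] [ContinuousSMul ℝ E] [T2Space E]

theorem isClosed_hull_range (v : κ → E) : IsClosed (hull ℝ (Set.range v) : Set E) := by
  classical
  have hunion : (hull ℝ (Set.range v) : Set E) = ⋃ (t : Finset κ) (_ : LinearIndepOn ℝ v t),
      Fintype.linearCombination ℝ (fun k : t => v k) '' {c | 0 ≤ c} := by
    ext x
    simp only [SetLike.mem_coe, Set.mem_iUnion, Set.mem_image, Set.mem_ofPred_eq,
      Fintype.linearCombination_apply]
    constructor
    · intro hx
      obtain ⟨c, hc, rfl⟩ := mem_hull_range_iff.mp hx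
      obtain ⟨t, ht, c', hc', heq⟩ := exists_linearIndepOn_nonneg_sum_eq (v := v) univ
        (fun k _ => hc k)
      exact ⟨t, ht, fun k => c' k, fun k => hc' k k.2, by
        rw [sum_coe_sort t (fun k => c' k • v k), heq]⟩
    · rintro ⟨t, -, c, hc, rfl⟩
      exact Submodule.sum_mem _ fun k _ =>
        smul_mem _ (hc k) (subset_hull (Set.mem_range_self _))
  rw [hunion]
  refine isClosed_iUnion_of_finite fun t => isClosed_iUnion_of_finite fun ht => ?_
  have hemb := LinearMap.isClosedEmbedding_of_injective (LinearMap.ker_eq_bot.mpr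
    (linearIndependent_iff_injective_fintypeLinearCombination.mp ht))
  exact hemb.isClosedMap _ (isClosed_le continuous_const continuous_id)

end Topology

end PointedCone

open scoped RealInnerProductSpace in
theorem exists_nonneg_sum_smul_eq_of_forall_inner_nonneg {κ E : Type*} [Fintype κ]
    [NormedAddCommGroup E] [InnerProductSpace ℝ E] [CompleteSpace E] (v : κ → E) (b : E)
    (h : ∀ w, (∀ k, 0 ≤ ⟪v k, w⟫) → 0 ≤ ⟪b, w⟫) :
    ∃ c : κ → ℝ, 0 ≤ c ∧ ∑ k, c k • v k = b := by
  rw [← PointedCone.mem_hull_range_iff]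
  by_contra hb
  let C : ProperCone ℝ E := ⟨_, PointedCone.isClosed_hull_range v⟩
  obtain ⟨w, hwC, hwb⟩ := C.hyperplane_separation' hb
  exact hwb.not_ge (h w fun k => hwC _ (PointedCone.subset_hull (Set.mem_range_self k)))

namespace Matrix

variable {ι κ : Type*} [Fintype ι] [Fintype κ]

theorem exists_nonneg_mulVec_eq_of_forall_vecMul_nonneg (B : Matrix ι κ ℝ) (b : ι → ℝ)
    (h : ∀ w, 0 ≤ w ᵥ* B → 0 ≤ w ⬝ᵥ b) : ∃ x, 0 ≤ x ∧ B *ᵥ x = b := by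
  obtain ⟨x, hx, hxb⟩ := exists_nonneg_sum_smul_eq_of_forall_inner_nonneg
    (fun k => WithLp.toLp 2 (Bᵀ k)) (WithLp.toLp 2 b) fun w hw => h w.ofLp hw
  refine ⟨x, hx, ?_⟩
  simp only [← WithLp.toLp_smul, ← WithLp.toLp_sum] at hxb
  rw [← WithLp.toLp_injective 2 hxb]
  ext i
  simp [mulVec, dotProduct, mul_comm]

theorem exists_nonneg_mulVec_le_iff (A : Matrix ι κ ℝ) (b : ι → ℝ) :
    (∃ x, 0 ≤ x ∧ A *ᵥ x ≤ b) ↔ ∀ w, 0 ≤ w → 0 ≤ w ᵥ* A → 0 ≤ w ⬝ᵥ b := by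
  classical
  constructor
  · rintro ⟨x, hx, hAx⟩ w hw hwA
    calc 0 ≤ w ᵥ* A ⬝ᵥ x := dotProduct_nonneg_of_nonneg hwA hx
      _ = w ⬝ᵥ A *ᵥ x := (dotProduct_mulVec w A x).symm
      _ ≤ w ⬝ᵥ b := dotProduct_le_dotProduct_of_nonneg_left hAx hw
  · intro h
    -- a slack variable for each row turns `A *ᵥ x ≤ b` into `[A | 1] *ᵥ (x, s) = b`
    obtain ⟨xs, hxs, hxsb⟩ := exists_nonneg_mulVec_eq_of_forall_vecMul_nonneg (fromCols A 1) b
      fun w hw => by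
        rw [vecMul_fromCols, vecMul_one] at hw
        exact h w (fun i => hw (Sum.inr i)) (fun k => hw (Sum.inl k))
    refine ⟨xs ∘ Sum.inl, fun k => hxs _, fun i => ?_⟩
    rw [← hxsb, fromCols_mulVec, one_mulVec]
    exact le_add_of_nonneg_right (hxs _)

end Matrix

open Matrix

def separationBound {V : Type*} (y : Finset V → ℝ) (π : V → V → ℝ) : Finset V ⊕ V × V → ℝ :=
  Sum.elim (-y) fun p => π p.1 p.2

lemma dotProduct_separationBound {V : Type*} [Fintype V] (w : Finset V ⊕ V × V → ℝ)
    (y : Finset V → ℝ) (π : V → V → ℝ) :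
    w ⬝ᵥ separationBound y π = ∑ i, ∑ j, w (.inr (i, j)) * π i j - ∑ S, w (.inl S) * y S := by
  simp only [dotProduct, separationBound, Fintype.sum_sum_type, Sum.elim_inl, Pi.neg_apply,
    mul_neg, sum_neg_distrib, Sum.elim_inr, Fintype.sum_prod_type]
  ring

section Separation

variable {V : Type*} [Fintype V] [DecidableEq V]

lemma maxSep_nonneg (α : Finset V → ℝ) (i j : V) : 0 ≤ maxSep α i j :=
  le_max' _ 0 (mem_insert_self _ _)

lemma le_maxSep {α : Finset V → ℝ} {S : Finset V} {i j : V} (h : SepSet S i j) :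
    α S ≤ maxSep α i j :=
  le_max' _ _ (mem_insert_of_mem (mem_image_of_mem α (mem_filter.mpr ⟨mem_univ S, h⟩)))

lemma maxSep_le {α : Finset V → ℝ} {i j : V} {b : ℝ} (h0 : 0 ≤ b)
    (h : ∀ S, SepSet S i j → α S ≤ b) : maxSep α i j ≤ b := by
  refine max'_le _ _ _ fun a ha => ?_
  rcases mem_insert.mp ha with rfl | ha
  · exact h0
  · obtain ⟨S, hS, rfl⟩ := mem_image.mp ha
    exact h S (mem_filter.mp hS).2

variable (V) in
-- The demand rows `∑_{ij} x_{S,ij} ≥ y_S` are negated, so that the system reads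
-- `separationMatrix V *ᵥ x ≤ separationBound y π`.
def separationMatrix : Matrix (Finset V ⊕ V × V) (Finset V × V × V) ℝ
  | .inl S, (S', i, j) => if S' = S ∧ SepSet S' i j then -1 else 0
  | .inr (i, j), (S, i', j') => if (i', j') = (i, j) ∧ SepSet S i' j' then 1 else 0

lemma separationMatrix_mulVec_inl (x : Finset V × V × V → ℝ) (S : Finset V) :
    (separationMatrix V *ᵥ x) (.inl S) =
      -∑ i, ∑ j, if SepSet S i j then x (S, i, j) else 0 := by
  simp [separationMatrix, mulVec, dotProduct, Fintype.sum_prod_type, ite_and, ← sum_neg_distrib,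
    apply_ite]

lemma separationMatrix_mulVec_inr (x : Finset V × V × V → ℝ) (i j : V) :
    (separationMatrix V *ᵥ x) (.inr (i, j)) = ∑ S, if SepSet S i j then x (S, i, j) else 0 := by
  simp [separationMatrix, mulVec, dotProduct, Fintype.sum_prod_type, ite_and]

lemma vecMul_separationMatrix (w : Finset V ⊕ V × V → ℝ) (S : Finset V) (i j : V) :
    (w ᵥ* separationMatrix V) (S, i, j) =
      if SepSet S i j then w (.inr (i, j)) - w (.inl S) else 0 := by
  simp only [vecMul, dotProduct, separationMatrix, ite_and, Prod.mk.injEq, Fintype.sum_sum_type,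
    mul_ite, mul_neg, mul_one, mul_zero, sum_ite_eq, mem_univ, ↓reduceIte, Fintype.sum_prod_type,
    sum_ite_irrel, sum_const_zero]
  split_ifs <;> ring

theorem exists_separating_weights_iff (y : Finset V → ℝ) (π : V → V → ℝ) :
    (∃ yp : Finset V → V → V → ℝ,
      (∀ S i j, 0 ≤ yp S i j) ∧
      (∀ S i j, ¬ SepSet S i j → yp S i j = 0) ∧
      (∀ S : Finset V, y S ≤ ∑ i : V, ∑ j : V, yp S i j) ∧
      (∀ i j : V, ∑ S : Finset V, yp S i j ≤ π i j)) ↔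
    ∃ x, 0 ≤ x ∧ separationMatrix V *ᵥ x ≤ separationBound y π := by
  constructor
  · rintro ⟨yp, hnonneg, hsupp, hdemand, hcap⟩
    have hmask : ∀ S i j, (if SepSet S i j then yp S i j else 0) = yp S i j :=
      fun S i j => ite_eq_left_iff.mpr fun h => (hsupp S i j h).symm
    refine ⟨fun q => yp q.1 q.2.1 q.2.2, fun q => hnonneg _ _ _, ?_⟩
    rintro (S | ⟨i, j⟩)
    · simpa [separationMatrix_mulVec_inl, hmask, separationBound] using hdemand S
    · simpa [separationMatrix_mulVec_inr, hmask, separationBound] using hcap i j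
  · rintro ⟨x, hx, hMx⟩
    refine ⟨fun S i j => if SepSet S i j then x (S, i, j) else 0,
      fun S i j => ite_nonneg (hx _) le_rfl, fun S i j h => if_neg h, fun S => ?_, fun i j => ?_⟩
    · simpa [separationMatrix_mulVec_inl, separationBound] using hMx (.inl S)
    · simpa [separationMatrix_mulVec_inr, separationBound] using hMx (.inr (i, j))

theorem forall_vecMul_separationMatrix_iff (y : Finset V → ℝ) (π : V → V → ℝ)
    (hπ : ∀ i j, 0 ≤ π i j) :
    (∀ w, 0 ≤ w → 0 ≤ w ᵥ* separationMatrix V → 0 ≤ w ⬝ᵥ separationBound y π) ↔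
    ∀ α : Finset V → ℝ, (∀ S, 0 ≤ α S) →
      ∑ S, α S * y S ≤ ∑ i, ∑ j, maxSep α i j * π i j := by
  constructor
  · intro h α hα
    -- `maxSep α i j` is the least nonnegative price of `(i, j)` dual-feasible with `α`
    have := h (Sum.elim α fun p => maxSep α p.1 p.2)
      (by rintro (S | ⟨i, j⟩); exacts [hα S, maxSep_nonneg α i j])
      (fun ⟨S, i, j⟩ => by
        rw [vecMul_separationMatrix]
        split_ifs with hS
        exacts [sub_nonneg.mpr (le_maxSep hS), le_rfl])
    simpa [dotProduct_separationBound] using this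
  · intro h w hw hwM
    have hmax : ∀ i j, maxSep (w ∘ .inl) i j ≤ w (.inr (i, j)) := fun i j =>
      maxSep_le (hw _) fun S hS => by
        simpa [vecMul_separationMatrix, hS] using hwM (S, i, j)
    rw [dotProduct_separationBound, sub_nonneg]
    calc ∑ S, w (.inl S) * y S
        ≤ ∑ i, ∑ j, maxSep (w ∘ .inl) i j * π i j := h _ fun S => hw _
      _ ≤ ∑ i, ∑ j, w (.inr (i, j)) * π i j := by gcongr with i _ j _; exacts [hπ i j, hmax i j]

end Separation

theorem farkas_characterization_of_feasibility_general {V : Type*} [Fintype V] [DecidableEq V]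
    (y : Finset V → ℝ)
    (π : V → V → ℝ) (hπ : ∀ i j, 0 ≤ π i j) :
    (∃ yp : Finset V → V → V → ℝ,
      (∀ S i j, 0 ≤ yp S i j) ∧
      (∀ S i j, ¬ SepSet S i j → yp S i j = 0) ∧
      (∀ S : Finset V, y S ≤ ∑ i : V, ∑ j : V, yp S i j) ∧
      (∀ i j : V, ∑ S : Finset V, yp S i j ≤ π i j)) ↔
    (∀ α : Finset V → ℝ, (∀ S, 0 ≤ α S) →
      ∑ S : Finset V, α S * y S ≤ ∑ i : V, ∑ j : V, maxSep α i j * π i j) := by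
  rw [exists_separating_weights_iff, exists_nonneg_mulVec_le_iff,
    forall_vecMul_separationMatrix_iff y π hπ]

/-- Farkas: given `y_S ≥ 0` and penalties `π_{ij} ≥ 0`, there exist
nonnegative `y_{S,ij}` (supported where `S` separates `(i,j)`) with
`∑_{(i,j) : S⊙(i,j)} y_{S,ij} ≥ y_S` for all `S` and `∑_{S : S⊙(i,j)} y_{S,ij} ≤ π_{ij}`
for all pairs, if and only if for every `α : 2^V → ℝ≥0` one has
`∑_S α_S y_S ≤ ∑_{(i,j)} (max_{S : S⊙(i,j)} α_S) π_{ij}`. -/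
theorem farkas_characterization_of_feasibility {V : Type*} [Fintype V] [DecidableEq V]
    (y : Finset V → ℝ) (hy : ∀ S, 0 ≤ y S)
    (π : V → V → ℝ) (hπ : ∀ i j, 0 ≤ π i j) (hsymm : ∀ i j, π i j = π j i) :
    (∃ yp : Finset V → V → V → ℝ,
      (∀ S i j, 0 ≤ yp S i j) ∧
      (∀ S i j, ¬ SepSet S i j → yp S i j = 0) ∧
      (∀ S : Finset V, y S ≤ ∑ i : V, ∑ j : V, yp S i j) ∧
      (∀ i j : V, ∑ S : Finset V, yp S i j ≤ π i j)) ↔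
    (∀ α : Finset V → ℝ, (∀ S, 0 ≤ α S) →
      ∑ S : Finset V, α S * y S ≤ ∑ i : V, ∑ j : V, maxSep α i j * π i j) :=
  farkas_characterization_of_feasibility_general y π hπ
end

section
/- If x is a feasible fractional solution to the per-vertex-penalty LP (∑_{v∈Γ(S)} x_v + y_u ≥ 1 for all S ⊆ V∖{r}, u ∈ S), and Q = {u : y_u ≤ α} for some α ∈ (0,1), then x' = x/(1-α) is feasible to the Steiner tree covering LP with terminal set Q, i.e., ∑_{v∈Γ(S)} x'_v ≥ 1 for all S ⊆ V∖{r} with S ∩ Q ≠ ∅. -/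
open Finset

/-- The outer vertex boundary `Γ(S)` of a set `S`. -/
def vGamma {V : Type*} [Fintype V] [DecidableEq V] (G : SimpleGraph V)
    [DecidableRel G.Adj] (S : Finset V) : Finset V :=
  (Finset.univ \ S).filter (fun v => ∃ u ∈ S, G.Adj u v)

theorem threshold_rounding_feasibility_general {V : Type*} [Fintype V] [DecidableEq V]
    (G : SimpleGraph V) [DecidableRel G.Adj] (r : V)
    (x y : V → ℝ)
    (α : ℝ) (hα1 : α < 1)
    (hfeas : ∀ S : Finset V, r ∉ S → ∀ u ∈ S, (∑ v ∈ vGamma G S, x v) + y u ≥ 1) :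
    ∀ S : Finset V, r ∉ S → (∃ u ∈ S, y u ≤ α) →
      (∑ v ∈ vGamma G S, x v / (1 - α)) ≥ 1 := by
  rintro S hr ⟨u, huS, huα⟩
  have hcover : 1 - α ≤ ∑ v ∈ vGamma G S, x v := by linarith [hfeas S hr u huS]
  rw [← Finset.sum_div, ge_iff_le, one_le_div₀ (sub_pos.mpr hα1)]
  exact hcover

/-- if `(x, y)` is feasible to the per-vertex-penalty LP
(`∑_{v ∈ Γ(S)} x_v + y_u ≥ 1` for all `S ⊆ V∖{r}`, `u ∈ S`) and
`Q = {u : y_u ≤ α}` for a threshold `α ∈ (0,1)`, then `x' = x/(1-α)` is feasible to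
the Steiner tree covering LP with terminal set `Q`:
`∑_{v ∈ Γ(S)} x'_v ≥ 1` for every `S ⊆ V∖{r}` meeting `Q`. -/
theorem threshold_rounding_feasibility {V : Type*} [Fintype V] [DecidableEq V]
    (G : SimpleGraph V) [DecidableRel G.Adj] (r : V)
    (x y : V → ℝ) (hx : ∀ v, 0 ≤ x v) (hy : ∀ u, 0 ≤ y u)
    (α : ℝ) (hα0 : 0 < α) (hα1 : α < 1)
    (hfeas : ∀ S : Finset V, r ∉ S → ∀ u ∈ S, (∑ v ∈ vGamma G S, x v) + y u ≥ 1) :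
    ∀ S : Finset V, r ∉ S → (∃ u ∈ S, y u ≤ α) →
      (∑ v ∈ vGamma G S, x v / (1 - α)) ≥ 1 :=
  threshold_rounding_feasibility_general G r x y α hα1 hfeas
end
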